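/- arXiv:2601.20977 — 6 statements merged into one kernel-verified Lean document; each statement's English description precedes it below -/
import Mathlib

section
/- Fix-at-zero rule for binary nonlinear programs (Theorem 3.1, part 1): Let UB = f(x̄,ȳ) be the objective value of a feasible solution (x̄,ȳ) of BNLP, and let (λ̂,μ̂,υ̂,ν̂) together with ζ̂ ∈ ℝ be a dual-feasible certificate with value ζ̂. Then for every optimal solution (x*,y*) of BNLP and every index k ∈ {1,…,n}: if UB − ζ̂ < υ̂_k, then x*_k = 0. -/
/-- Fix-at-zero rule for binary nonlinear programs (Theorem 3.1, part 1).
A feasible point of BNLP satisfies `g x y ≤ 0`, `h x y = 0`, and `x` binary.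
`D` contains all feasible points. `(lam, mu, up, nu)` with value `zeta` is a
dual-feasible certificate. If `UB - zeta < up k` then every optimal solution
has `x* k = 0`. -/
theorem fix_at_zero_BNLP
    {n q m p : ℕ}
    (f : (Fin n → ℝ) → (Fin q → ℝ) → ℝ)
    (g : (Fin n → ℝ) → (Fin q → ℝ) → (Fin m → ℝ))
    (h : (Fin n → ℝ) → (Fin q → ℝ) → (Fin p → ℝ))
    (D : Set ((Fin n → ℝ) × (Fin q → ℝ)))
    (hD : ∀ x y, ((∀ i, g x y i ≤ 0) ∧ (∀ i, h x y i = 0) ∧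
      (∀ k, x k = 0 ∨ x k = 1)) → (x, y) ∈ D)
    (lam : Fin m → ℝ) (mu : Fin p → ℝ) (up : Fin n → ℝ) (nu : Fin n → ℝ)
    (zeta : ℝ)
    (hlam : ∀ i, 0 ≤ lam i) (hup : ∀ k, 0 ≤ up k) (hnu : ∀ k, 0 ≤ nu k)
    (hdual : ∀ x y, (x, y) ∈ D →
      zeta ≤ -(∑ k, nu k) + f x y + (∑ i, lam i * g x y i)
        + (∑ i, mu i * h x y i) - (∑ k, (up k - nu k) * x k))
    (xbar : Fin n → ℝ) (ybar : Fin q → ℝ)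
    (hxbar : (∀ i, g xbar ybar i ≤ 0) ∧ (∀ i, h xbar ybar i = 0) ∧
      (∀ k, xbar k = 0 ∨ xbar k = 1))
    (UB : ℝ) (hUB : UB = f xbar ybar)
    (xs : Fin n → ℝ) (ys : Fin q → ℝ)
    (hfeas : (∀ i, g xs ys i ≤ 0) ∧ (∀ i, h xs ys i = 0) ∧
      (∀ k, xs k = 0 ∨ xs k = 1))
    (hopt : ∀ x y, ((∀ i, g x y i ≤ 0) ∧ (∀ i, h x y i = 0) ∧
      (∀ k, x k = 0 ∨ x k = 1)) → f xs ys ≤ f x y)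
    (k : Fin n) (hk : UB - zeta < up k) :
    xs k = 0 := by
  rcases hfeas with ⟨hg, hh, hbin⟩
  rcases hbin k with h0 | h1
  · exact h0
  exfalso
  have hmem : (xs, ys) ∈ D := hD xs ys ⟨hg, hh, fun j => hbin j⟩
  have hd := hdual xs ys hmem
  have hgle : (∑ i, lam i * g xs ys i) ≤ 0 := by
    apply Finset.sum_nonpos
    intro i _
    exact mul_nonpos_of_nonneg_of_nonpos (hlam i) (hg i)
  have hhz : (∑ i, mu i * h xs ys i) = 0 := by
    apply Finset.sum_eq_zero
    intro i _
    rw [hh i]; ring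
  have hsum : up k ≤ (∑ j, nu j) + (∑ j, (up j - nu j) * xs j) := by
    rw [← Finset.sum_add_distrib]
    have : up k = nu k + (up k - nu k) * xs k := by rw [h1]; ring
    rw [this]
    apply Finset.single_le_sum (f := fun j => nu j + (up j - nu j) * xs j)
      (fun j _ => ?_) (Finset.mem_univ k)
    rcases hbin j with hj | hj
    · rw [hj]; simpa using hnu j
    · rw [hj]; have := hup j; linarith
  have hfle : f xs ys ≤ UB := by
    rw [hUB]; exact hopt xbar ybar hxbar
  linarith
end

section
/- Fix-at-one rule for binary nonlinear programs (Theorem 3.1, part 2): Let UB = f(x̄,ȳ) be the objective value of a feasible solution (x̄,ȳ) of BNLP, and let (λ̂,μ̂,υ̂,ν̂) together with ζ̂ ∈ ℝ be a dual-feasible certificate with value ζ̂. Then for every optimal solution (x*,y*) of BNLP and every index k ∈ {1,…,n}: if UB − ζ̂ < ν̂_k, then x*_k = 1. -/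
/-- Fix-at-one rule for binary nonlinear programs (Theorem 3.1, part 2).
If `UB - zeta < nu k` then every optimal solution has `x* k = 1`. -/
theorem fix_at_one_BNLP
    {n q m p : ℕ}
    (f : (Fin n → ℝ) → (Fin q → ℝ) → ℝ)
    (g : (Fin n → ℝ) → (Fin q → ℝ) → (Fin m → ℝ))
    (h : (Fin n → ℝ) → (Fin q → ℝ) → (Fin p → ℝ))
    (D : Set ((Fin n → ℝ) × (Fin q → ℝ)))
    (hD : ∀ x y, ((∀ i, g x y i ≤ 0) ∧ (∀ i, h x y i = 0) ∧
      (∀ k, x k = 0 ∨ x k = 1)) → (x, y) ∈ D)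
    (lam : Fin m → ℝ) (mu : Fin p → ℝ) (up : Fin n → ℝ) (nu : Fin n → ℝ)
    (zeta : ℝ)
    (hlam : ∀ i, 0 ≤ lam i) (hup : ∀ k, 0 ≤ up k) (hnu : ∀ k, 0 ≤ nu k)
    (hdual : ∀ x y, (x, y) ∈ D →
      zeta ≤ -(∑ k, nu k) + f x y + (∑ i, lam i * g x y i)
        + (∑ i, mu i * h x y i) - (∑ k, (up k - nu k) * x k))
    (xbar : Fin n → ℝ) (ybar : Fin q → ℝ)
    (hxbar : (∀ i, g xbar ybar i ≤ 0) ∧ (∀ i, h xbar ybar i = 0) ∧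
      (∀ k, xbar k = 0 ∨ xbar k = 1))
    (UB : ℝ) (hUB : UB = f xbar ybar)
    (xs : Fin n → ℝ) (ys : Fin q → ℝ)
    (hfeas : (∀ i, g xs ys i ≤ 0) ∧ (∀ i, h xs ys i = 0) ∧
      (∀ k, xs k = 0 ∨ xs k = 1))
    (hopt : ∀ x y, ((∀ i, g x y i ≤ 0) ∧ (∀ i, h x y i = 0) ∧
      (∀ k, x k = 0 ∨ x k = 1)) → f xs ys ≤ f x y)
    (k : Fin n) (hk : UB - zeta < nu k) :
    xs k = 1 := by
  obtain ⟨hg, hh, hbin⟩ := hfeas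
  rcases hbin k with h0 | h1
  · exfalso
    have hmem : (xs, ys) ∈ D := hD xs ys ⟨hg, hh, hbin⟩
    have hd := hdual xs ys hmem
    have hL : (∑ i, lam i * g xs ys i) ≤ 0 :=
      Finset.sum_nonpos fun i _ => mul_nonpos_of_nonneg_of_nonpos (hlam i) (hg i)
    have hH : (∑ i, mu i * h xs ys i) = 0 := by simp [hh]
    have hS : -(∑ j, nu j) - (∑ j, (up j - nu j) * xs j) ≤ -nu k := by
      have hge : nu k ≤ ∑ j, (nu j + (up j - nu j) * xs j) := by
        have hterm : ∀ j ∈ Finset.univ, 0 ≤ nu j + (up j - nu j) * xs j := by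
          intro j _
          rcases hbin j with hj | hj <;> simp [hj] <;> linarith [hnu j, hup j]
        calc nu k = nu k + (up k - nu k) * xs k := by simp [h0]
          _ ≤ ∑ j, (nu j + (up j - nu j) * xs j) :=
            Finset.single_le_sum hterm (Finset.mem_univ k)
      have hsum : ∑ j, (nu j + (up j - nu j) * xs j)
          = (∑ j, nu j) + ∑ j, (up j - nu j) * xs j := Finset.sum_add_distrib
      linarith
    have hfle : f xs ys ≤ UB := by rw [hUB]; exact hopt xbar ybar hxbar
    linarith
  · exact h1
end

section
/- Lower bound for the up-branch (step in the proof of Theorem 3.1): Let (λ̂,μ̂,υ̂,ν̂) together with ζ̂ ∈ ℝ be a dual-feasible certificate with value ζ̂, and fix an index k ∈ {1,…,n}. Then ζ̂ + υ̂_k ≤ f(x,y) for every feasible solution (x,y) of BNLP with x_k = 1. -/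
/-- Lower bound for the up-branch (step in the proof of Theorem 3.1):
`zeta + up k ≤ f x y` for every feasible solution of BNLP with `x k = 1`. -/
theorem up_branch_lower_bound_BNLP
    {n q m p : ℕ}
    (f : (Fin n → ℝ) → (Fin q → ℝ) → ℝ)
    (g : (Fin n → ℝ) → (Fin q → ℝ) → (Fin m → ℝ))
    (h : (Fin n → ℝ) → (Fin q → ℝ) → (Fin p → ℝ))
    (D : Set ((Fin n → ℝ) × (Fin q → ℝ)))
    (hD : ∀ x y, ((∀ i, g x y i ≤ 0) ∧ (∀ i, h x y i = 0) ∧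
      (∀ k, x k = 0 ∨ x k = 1)) → (x, y) ∈ D)
    (lam : Fin m → ℝ) (mu : Fin p → ℝ) (up : Fin n → ℝ) (nu : Fin n → ℝ)
    (zeta : ℝ)
    (hlam : ∀ i, 0 ≤ lam i) (hup : ∀ k, 0 ≤ up k) (hnu : ∀ k, 0 ≤ nu k)
    (hdual : ∀ x y, (x, y) ∈ D →
      zeta ≤ -(∑ k, nu k) + f x y + (∑ i, lam i * g x y i)
        + (∑ i, mu i * h x y i) - (∑ k, (up k - nu k) * x k))
    (k : Fin n)
    (x : Fin n → ℝ) (y : Fin q → ℝ)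
    (hfeas : (∀ i, g x y i ≤ 0) ∧ (∀ i, h x y i = 0) ∧
      (∀ j, x j = 0 ∨ x j = 1))
    (hxk : x k = 1) :
    zeta + up k ≤ f x y := by
  obtain ⟨hg, hh, hx⟩ := hfeas
  have hmem : (x, y) ∈ D := hD x y ⟨hg, hh, hx⟩
  have hd := hdual x y hmem
  have hx0 : ∀ j, 0 ≤ x j := fun j => by rcases hx j with h1 | h1 <;> simp [h1]
  have hx1 : ∀ j, x j ≤ 1 := fun j => by rcases hx j with h1 | h1 <;> simp [h1]
  have hgle : (∑ i, lam i * g x y i) ≤ 0 :=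
    Finset.sum_nonpos fun i _ => mul_nonpos_of_nonneg_of_nonpos (hlam i) (hg i)
  have hheq : (∑ i, mu i * h x y i) = 0 :=
    Finset.sum_eq_zero fun i _ => by rw [hh i, mul_zero]
  have hsplit : (∑ j, (up j - nu j) * x j) = (∑ j, up j * x j) - (∑ j, nu j * x j) := by
    rw [← Finset.sum_sub_distrib]; congr 1; ext j; ring
  have hupx : up k ≤ ∑ j, up j * x j := by
    have := Finset.single_le_sum (f := fun j => up j * x j)
      (fun j _ => mul_nonneg (hup j) (hx0 j)) (Finset.mem_univ k)
    simpa [hxk] using this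
  have hnux : (∑ j, nu j * x j) ≤ ∑ j, nu j :=
    Finset.sum_le_sum fun j _ => by
      calc nu j * x j ≤ nu j * 1 := mul_le_mul_of_nonneg_left (hx1 j) (hnu j)
        _ = nu j := mul_one _
  have key : up k - (∑ j, nu j) ≤ ∑ j, (up j - nu j) * x j := by
    rw [hsplit]; exact sub_le_sub hupx hnux
  rw [hheq] at hd
  linarith
end

section
/- Lower bound for the down-branch (step in the proof of Theorem 3.1): Let (λ̂,μ̂,υ̂,ν̂) together with ζ̂ ∈ ℝ be a dual-feasible certificate with value ζ̂, and fix an index k ∈ {1,…,n}. Then ζ̂ + ν̂_k ≤ f(x,y) for every feasible solution (x,y) of BNLP with x_k = 0. -/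
/-- Lower bound for the down-branch (step in the proof of Theorem 3.1):
`zeta + nu k ≤ f x y` for every feasible solution of BNLP with `x k = 0`. -/
theorem down_branch_lower_bound_BNLP
    {n q m p : ℕ}
    (f : (Fin n → ℝ) → (Fin q → ℝ) → ℝ)
    (g : (Fin n → ℝ) → (Fin q → ℝ) → (Fin m → ℝ))
    (h : (Fin n → ℝ) → (Fin q → ℝ) → (Fin p → ℝ))
    (D : Set ((Fin n → ℝ) × (Fin q → ℝ)))
    (hD : ∀ x y, ((∀ i, g x y i ≤ 0) ∧ (∀ i, h x y i = 0) ∧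
      (∀ k, x k = 0 ∨ x k = 1)) → (x, y) ∈ D)
    (lam : Fin m → ℝ) (mu : Fin p → ℝ) (up : Fin n → ℝ) (nu : Fin n → ℝ)
    (zeta : ℝ)
    (hlam : ∀ i, 0 ≤ lam i) (hup : ∀ k, 0 ≤ up k) (hnu : ∀ k, 0 ≤ nu k)
    (hdual : ∀ x y, (x, y) ∈ D →
      zeta ≤ -(∑ k, nu k) + f x y + (∑ i, lam i * g x y i)
        + (∑ i, mu i * h x y i) - (∑ k, (up k - nu k) * x k))
    (k : Fin n)
    (x : Fin n → ℝ) (y : Fin q → ℝ)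
    (hfeas : (∀ i, g x y i ≤ 0) ∧ (∀ i, h x y i = 0) ∧
      (∀ j, x j = 0 ∨ x j = 1))
    (hxk : x k = 0) :
    zeta + nu k ≤ f x y := by
  obtain ⟨hg, hh, hbin⟩ := hfeas
  have hmem := hD x y ⟨hg, hh, hbin⟩
  have hd := hdual x y hmem
  have hg0 : (∑ i, lam i * g x y i) ≤ 0 :=
    Finset.sum_nonpos fun i _ => mul_nonpos_of_nonneg_of_nonpos (hlam i) (hg i)
  have hh0 : (∑ i, mu i * h x y i) = 0 :=
    Finset.sum_eq_zero fun i _ => by rw [hh i, mul_zero]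
  have hsum : nu k ≤ ∑ j, (nu j + (up j - nu j) * x j) := by
    have : nu k = nu k + (up k - nu k) * x k := by rw [hxk, mul_zero, add_zero]
    rw [this]
    apply Finset.single_le_sum (f := fun j => nu j + (up j - nu j) * x j)
      (fun j _ => ?_) (Finset.mem_univ k)
    show 0 ≤ nu j + (up j - nu j) * x j
    rcases hbin j with h0 | h1
    · rw [h0, mul_zero, add_zero]; exact hnu j
    · rw [h1, mul_one]; linarith [hup j]
  have hsplit : (∑ j, (nu j + (up j - nu j) * x j))
      = (∑ j, nu j) + (∑ j, (up j - nu j) * x j) := Finset.sum_add_distrib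
  linarith
end

section
/- Fix-at-zero rule for binary linear programs: Let UB = cᵀx̄ be the objective value of a feasible solution x̄ of BLP, and let (λ̂,μ̂,υ̂,ν̂) be a dual-feasible solution with dual objective value ζ̂ = λ̂ᵀb + μ̂ᵀd − ν̂ᵀ𝟙. Then for every optimal solution x* of BLP and every index k ∈ {1,…,n}: if UB − ζ̂ < c_k − (λ̂ᵀA_{·k} + μ̂ᵀC_{·k} − ν̂_k), then x*_k = 0, where A_{·k} and C_{·k} denote the k-th columns of A and C. -/
/-- Fix-at-zero rule for binary linear programs: if
`UB - zeta < c k - (lamᵀA_k + muᵀC_k - nu k)` then every optimal solution of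
BLP has `x* k = 0`. -/
theorem fix_at_zero_BLP
    {m n p : ℕ}
    (A : Matrix (Fin m) (Fin n) ℝ) (C : Matrix (Fin p) (Fin n) ℝ)
    (b : Fin m → ℝ) (d : Fin p → ℝ) (c : Fin n → ℝ)
    (lam : Fin m → ℝ) (mu : Fin p → ℝ) (up : Fin n → ℝ) (nu : Fin n → ℝ)
    (hlam : ∀ i, 0 ≤ lam i) (hup : ∀ k, 0 ≤ up k) (hnu : ∀ k, 0 ≤ nu k)
    (hdual : ∀ k, (∑ i, lam i * A i k) + (∑ i, mu i * C i k) + up k - nu k = c k)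
    (zeta : ℝ)
    (hzeta : zeta = (∑ i, lam i * b i) + (∑ i, mu i * d i) - ∑ k, nu k)
    (xbar : Fin n → ℝ)
    (hxbar : (∀ i, b i ≤ ∑ j, A i j * xbar j) ∧ (∀ i, ∑ j, C i j * xbar j = d i)
      ∧ ∀ j, xbar j = 0 ∨ xbar j = 1)
    (UB : ℝ) (hUB : UB = ∑ j, c j * xbar j)
    (xs : Fin n → ℝ)
    (hfeas : (∀ i, b i ≤ ∑ j, A i j * xs j) ∧ (∀ i, ∑ j, C i j * xs j = d i)
      ∧ ∀ j, xs j = 0 ∨ xs j = 1)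
    (hopt : ∀ x : Fin n → ℝ,
      ((∀ i, b i ≤ ∑ j, A i j * x j) ∧ (∀ i, ∑ j, C i j * x j = d i)
        ∧ ∀ j, x j = 0 ∨ x j = 1) → (∑ j, c j * xs j) ≤ ∑ j, c j * x j)
    (k : Fin n)
    (hk : UB - zeta < c k - ((∑ i, lam i * A i k) + (∑ i, mu i * C i k) - nu k)) :
    xs k = 0 := by
  -- reduced cost at k equals up k
  have hck : c k - ((∑ i, lam i * A i k) + (∑ i, mu i * C i k) - nu k) = up k := by
    have := hdual k; linarith
  -- weak duality with slack at position k
  have key : ∀ x : Fin n → ℝ,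
      ((∀ i, b i ≤ ∑ j, A i j * x j) ∧ (∀ i, ∑ j, C i j * x j = d i)
        ∧ ∀ j, x j = 0 ∨ x j = 1) → zeta + up k * x k ≤ ∑ j, c j * x j := by
    rintro x ⟨h1, h2, h3⟩
    have hx0 : ∀ j, 0 ≤ x j := by
      intro j; rcases h3 j with h | h <;> simp [h]
    have hx1 : ∀ j, x j ≤ 1 := by
      intro j; rcases h3 j with h | h <;> simp [h]
    have expand : ∑ j, c j * x j =
        (∑ i, lam i * ∑ j, A i j * x j) + (∑ i, mu i * ∑ j, C i j * x j)
          + (∑ j, up j * x j) - ∑ j, nu j * x j := by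
      have eA : (∑ i, lam i * ∑ j, A i j * x j)
          = ∑ j, (∑ i, lam i * A i j) * x j := by
        simp_rw [Finset.mul_sum, Finset.sum_mul, mul_assoc]
        exact Finset.sum_comm ..
      have eC : (∑ i, mu i * ∑ j, C i j * x j)
          = ∑ j, (∑ i, mu i * C i j) * x j := by
        simp_rw [Finset.mul_sum, Finset.sum_mul, mul_assoc]
        exact Finset.sum_comm ..
      rw [eA, eC, ← Finset.sum_add_distrib, ← Finset.sum_add_distrib,
        ← Finset.sum_sub_distrib]
      refine Finset.sum_congr rfl fun j _ => ?_
      rw [← hdual j]; ring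
    have hA : (∑ i, lam i * b i) ≤ ∑ i, lam i * ∑ j, A i j * x j :=
      Finset.sum_le_sum fun i _ => mul_le_mul_of_nonneg_left (h1 i) (hlam i)
    have hC : (∑ i, mu i * ∑ j, C i j * x j) = ∑ i, mu i * d i :=
      Finset.sum_congr rfl fun i _ => by rw [h2 i]
    have hU : up k * x k ≤ ∑ j, up j * x j :=
      Finset.single_le_sum (fun j _ => mul_nonneg (hup j) (hx0 j)) (Finset.mem_univ k)
    have hN : (∑ j, nu j * x j) ≤ ∑ j, nu j :=
      Finset.sum_le_sum fun j _ => by nlinarith [hnu j, hx1 j]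
    rw [expand, hzeta, hC]
    linarith
  rcases hfeas.2.2 k with h | h
  · exact h
  · exfalso
    have h1 := key xs hfeas
    have h2 := hopt xbar hxbar
    rw [h, mul_one] at h1
    rw [hck] at hk
    rw [hUB] at hk
    linarith
end

section
/- Fix-at-one rule for binary linear programs: Let UB = cᵀx̄ be the objective value of a feasible solution x̄ of BLP, and let (λ̂,μ̂,υ̂,ν̂) be a dual-feasible solution with dual objective value ζ̂ = λ̂ᵀb + μ̂ᵀd − ν̂ᵀ𝟙. Then for every optimal solution x* of BLP and every index k ∈ {1,…,n}: if UB − ζ̂ < λ̂ᵀA_{·k} + μ̂ᵀC_{·k} + υ̂_k − c_k, then x*_k = 1, where A_{·k} and C_{·k} denote the k-th columns of A and C. -/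
/-- Fix-at-one rule for binary linear programs: if
`UB - zeta < lamᵀA_k + muᵀC_k + up k - c k` then every optimal solution of
BLP has `x* k = 1`. -/
theorem fix_at_one_BLP
    {m n p : ℕ}
    (A : Matrix (Fin m) (Fin n) ℝ) (C : Matrix (Fin p) (Fin n) ℝ)
    (b : Fin m → ℝ) (d : Fin p → ℝ) (c : Fin n → ℝ)
    (lam : Fin m → ℝ) (mu : Fin p → ℝ) (up : Fin n → ℝ) (nu : Fin n → ℝ)
    (hlam : ∀ i, 0 ≤ lam i) (hup : ∀ k, 0 ≤ up k) (hnu : ∀ k, 0 ≤ nu k)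
    (hdual : ∀ k, (∑ i, lam i * A i k) + (∑ i, mu i * C i k) + up k - nu k = c k)
    (zeta : ℝ)
    (hzeta : zeta = (∑ i, lam i * b i) + (∑ i, mu i * d i) - ∑ k, nu k)
    (xbar : Fin n → ℝ)
    (hxbar : (∀ i, b i ≤ ∑ j, A i j * xbar j) ∧ (∀ i, ∑ j, C i j * xbar j = d i)
      ∧ ∀ j, xbar j = 0 ∨ xbar j = 1)
    (UB : ℝ) (hUB : UB = ∑ j, c j * xbar j)
    (xs : Fin n → ℝ)
    (hfeas : (∀ i, b i ≤ ∑ j, A i j * xs j) ∧ (∀ i, ∑ j, C i j * xs j = d i)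
      ∧ ∀ j, xs j = 0 ∨ xs j = 1)
    (hopt : ∀ x : Fin n → ℝ,
      ((∀ i, b i ≤ ∑ j, A i j * x j) ∧ (∀ i, ∑ j, C i j * x j = d i)
        ∧ ∀ j, x j = 0 ∨ x j = 1) → (∑ j, c j * xs j) ≤ ∑ j, c j * x j)
    (k : Fin n)
    (hk : UB - zeta < (∑ i, lam i * A i k) + (∑ i, mu i * C i k) + up k - c k) :
    xs k = 1 := by
  -- rewrite hk as UB - zeta < nu k
  have hknu : UB - zeta < nu k := by
    have := hdual k; linarith
  by_contra hone
  have hxs0 : xs k = 0 := (hfeas.2.2 k).resolve_right hone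
  -- expand cᵀ xs
  have hexp : (∑ j, c j * xs j)
      = (∑ i, lam i * ∑ j, A i j * xs j) + (∑ i, mu i * ∑ j, C i j * xs j)
        + ∑ j, (up j - nu j) * xs j := by
    have h1 : (∑ j, c j * xs j)
        = ∑ j, ((∑ i, lam i * A i j) + (∑ i, mu i * C i j) + up j - nu j) * xs j := by
      refine Finset.sum_congr rfl fun j _ => ?_
      rw [hdual j]
    rw [h1]
    simp only [add_mul, sub_mul, Finset.sum_add_distrib, Finset.sum_sub_distrib,
      Finset.sum_mul, Finset.mul_sum]
    rw [Finset.sum_comm (s := Finset.univ) (t := Finset.univ)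
      (f := fun j i => lam i * A i j * xs j)]
    rw [Finset.sum_comm (s := Finset.univ) (t := Finset.univ)
      (f := fun j i => mu i * C i j * xs j)]
    ring_nf
  -- bound the lam part
  have hA : (∑ i, lam i * b i) ≤ ∑ i, lam i * ∑ j, A i j * xs j :=
    Finset.sum_le_sum fun i _ => mul_le_mul_of_nonneg_left (hfeas.1 i) (hlam i)
  have hC : (∑ i, mu i * ∑ j, C i j * xs j) = ∑ i, mu i * d i :=
    Finset.sum_congr rfl fun i _ => by rw [hfeas.2.1 i]
  -- bound third part: ∑ ((up j - nu j)*xs j + nu j) ≥ nu k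
  have hterm : ∀ j : Fin n, 0 ≤ (up j - nu j) * xs j + nu j := by
    intro j
    rcases hfeas.2.2 j with h | h <;> rw [h] <;> [simp [hnu j]; nlinarith [hup j, hnu j]]
  have hthird : nu k ≤ ∑ j, ((up j - nu j) * xs j + nu j) := by
    have hkterm : (up k - nu k) * xs k + nu k = nu k := by rw [hxs0]; ring
    calc nu k = (up k - nu k) * xs k + nu k := hkterm.symm
      _ ≤ ∑ j, ((up j - nu j) * xs j + nu j) :=
        Finset.single_le_sum (fun j _ => hterm j) (Finset.mem_univ k)
  have hsplit : (∑ j, ((up j - nu j) * xs j + nu j))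
      = (∑ j, (up j - nu j) * xs j) + ∑ j, nu j := by
    rw [Finset.sum_add_distrib]
  -- optimality: cᵀxs ≤ UB
  have hle : (∑ j, c j * xs j) ≤ UB := by
    rw [hUB]; exact hopt xbar hxbar
  have : zeta + nu k ≤ ∑ j, c j * xs j := by
    rw [hexp, hzeta]
    nlinarith [hA, hC, hthird, hsplit]
  linarith
end
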